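/- Let H be a group and T a transversal for the derived subgroup H′ in H (a set of coset representatives of H′ in H). Then R(H) equals the subgroup of χ(H) generated by all conjugates by elements of T of the elements [h₁, h₂^ψ]^{h₃} · [h₁^{h₃}, (h₂^{h₃})^ψ]⁻¹, for h₁, h₂, h₃ ∈ H. -/

import Mathlib

open Subgroup
open scoped commutatorElement

/-- Relators of the weak commutativity group. -/
def chiRel (H : Type*) [Group H] : Set (Monoid.Coprod H H) :=
  {x | ∃ h : H, x = ⁅(Monoid.Coprod.inl h : Monoid.Coprod H H), Monoid.Coprod.inr h⁆}

/-- The weak commutativity group χ(H). -/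
def chi (H : Type*) [Group H] : Type _ :=
  Monoid.Coprod H H ⧸ Subgroup.normalClosure (chiRel H)

noncomputable instance (H : Type*) [Group H] : Group (chi H) :=
  QuotientGroup.Quotient.group _

/-- Canonical map H → χ(H). -/
noncomputable def chiIota (H : Type*) [Group H] : H →* chi H :=
  (QuotientGroup.mk' _).comp Monoid.Coprod.inl

/-- Canonical map H → χ(H), h ↦ h^ψ. -/
noncomputable def chiPsi (H : Type*) [Group H] : H →* chi H :=
  (QuotientGroup.mk' _).comp Monoid.Coprod.inr

noncomputable def chiH (H : Type*) [Group H] : Subgroup (chi H) := (chiIota H).range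
noncomputable def chiHpsi (H : Type*) [Group H] : Subgroup (chi H) := (chiPsi H).range

/-- L(H) = ⟨h⁻¹ h^ψ⟩. -/
noncomputable def Lsub (H : Type*) [Group H] : Subgroup (chi H) :=
  Subgroup.closure {x | ∃ h : H, x = (chiIota H h)⁻¹ * chiPsi H h}

/-- D(H) = [H, H^ψ]. -/
noncomputable def Dsub (H : Type*) [Group H] : Subgroup (chi H) := ⁅chiH H, chiHpsi H⁆

/-- W(H) = L(H) ∩ D(H). -/
noncomputable def Wsub (H : Type*) [Group H] : Subgroup (chi H) := Lsub H ⊓ Dsub H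

/-- R(H) = [H, L(H), H^ψ]. -/
noncomputable def Rsub (H : Type*) [Group H] : Subgroup (chi H) := ⁅⁅chiH H, Lsub H⁆, chiHpsi H⁆

/-
Write `λ h = h⁻¹ h^ψ`, so that `L(H)` is generated by the `λ h`. Expanding the relation
`[h, h^ψ] = 1` for products `h = g u` shows that `D(H) = [H, H^ψ]` centralizes `L(H)` (Sidki).
Consequently each generator `[h₁, h₂^ψ]^{h₃} [h₁^{h₃}, (h₂^{h₃})^ψ]⁻¹` equals the double commutator
`⁅⁅λ(h₃⁻¹), h₂^ψ⁆, h₁^{h₃}⁆` and lies in `W = L ∩ D`, which is centralized by `D L ⊇ H'`.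
Hence conjugation by `h ∈ H` only matters modulo `H'`, conjugation by `L` is trivial on `D`, and the
subgroup `N` generated by the `T`-conjugates is normal.

Both inclusions then come from the three subgroups lemma modulo a normal subgroup, using
`[[H^ψ, H], L] = [D, L] = 1`. Modulo `R` it gives `[[L, H^ψ], H] ≤ R`, which contains the generators
of `N`. Modulo `N` it reduces `R = [[H, L], H^ψ] ≤ N` to `[[L, H^ψ], H] ≤ N`, which may be checked
on the generators `λ g` of `L` because `H D` is normal and `[L, H^ψ] ≤ L` commutes with `D`.
-/

section GroupLemmas

variable {G : Type*} [Group G]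

theorem commutatorElement_mul_right_of_commute {x d : G} (h : Commute x d) (y : G) :
    ⁅x, d * y⁆ = d * ⁅x, y⁆ * d⁻¹ := by
  calc ⁅x, d * y⁆ = (x * d) * y * x⁻¹ * y⁻¹ * d⁻¹ := by group
    _ = d * ⁅x, y⁆ * d⁻¹ := by rw [h.eq, commutatorElement_def]; group

/-- The relation `⁅x * y, x' * y'⁆ = 1`, expanded using `⁅x, x'⁆ = ⁅y, y'⁆ = 1`. -/
theorem commutatorElement_eq_conj_of_commute_mul {x x' y y' : G} (hx : Commute x x')
    (hy : Commute y y') (h : Commute (x * y) (x' * y')) :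
    ⁅y, x'⁆ = (x⁻¹ * x') * ⁅y', x⁆ * (x⁻¹ * x')⁻¹ := by
  have hyx' : y * x' = x⁻¹ * x' * y' * x * y'⁻¹ * y :=
    calc y * x' = x⁻¹ * (x * y * (x' * y')) * y'⁻¹ := by group
      _ = x⁻¹ * x' * y' * x * (y * y'⁻¹) := by rw [h.eq]; group
      _ = x⁻¹ * x' * y' * x * y'⁻¹ * y := by rw [hy.inv_right.eq]; group
  calc ⁅y, x'⁆ = (y * x') * y⁻¹ * x'⁻¹ := by group
    _ = x⁻¹ * x' * y' * x * y'⁻¹ * (x⁻¹ * x'⁻¹ * x) := by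
      rw [hyx', hx.inv_right.inv_left.eq]; group
    _ = (x⁻¹ * x') * ⁅y', x⁆ * (x⁻¹ * x')⁻¹ := by rw [commutatorElement_def]; group

namespace Subgroup

theorem normal_of_le_normalizer_of_sup_eq_top {A B K : Subgroup G} (hAB : A ⊔ B = ⊤)
    (hA : A ≤ normalizer (K : Set G)) (hB : B ≤ normalizer (K : Set G)) : K.Normal :=
  normalizer_eq_top_iff.mp (top_le_iff.mp (hAB ▸ sup_le hA hB))

theorem normal_commutator_of_sup_eq_top {A B : Subgroup G} (hAB : A ⊔ B = ⊤) :
    (⁅A, B⁆ : Subgroup G).Normal :=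
  normal_of_le_normalizer_of_sup_eq_top hAB (normalizer_commutator_ge_left A B)
    (normalizer_commutator_ge_right A B)

theorem normal_sup_commutator_of_sup_eq_top {A B : Subgroup G} (hAB : A ⊔ B = ⊤) :
    (A ⊔ ⁅A, B⁆).Normal := by
  refine normal_of_le_normalizer_of_sup_eq_top hAB (le_sup_left.trans le_normalizer) ?_
  have hcl : A ⊔ ⁅A, B⁆ = closure ((A : Set G) ∪ (⁅A, B⁆ : Subgroup G)) := by
    rw [closure_union, closure_eq, closure_eq]
  rw [hcl, le_normalizer_closure_iff]
  rintro b hb g (hg | hg)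
  · have hbg : b * g * b⁻¹ = ⁅b, g⁆ * g := by group
    rw [hbg, commutator_comm]
    exact mul_mem (subset_closure (Or.inr (commutator_mem_commutator hb hg)))
      (subset_closure (Or.inl hg))
  · exact subset_closure (Or.inr ((normalizer_commutator_ge_right A B hb g).mp hg))

theorem commutator_commutator_le_of_rotate {H₁ H₂ H₃ N : Subgroup G} [N.Normal]
    (h1 : ⁅⁅H₂, H₃⁆, H₁⁆ ≤ N) (h2 : ⁅⁅H₃, H₁⁆, H₂⁆ ≤ N) : ⁅⁅H₁, H₂⁆, H₃⁆ ≤ N := by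
  simp_rw [← QuotientGroup.ker_mk' N, ← map_eq_bot_iff, map_commutator] at h1 h2 ⊢
  exact commutator_commutator_eq_bot_of_rotate h1 h2

theorem commute_mk'_of_commutatorElement_mem {N : Subgroup G} [N.Normal] {x y : G}
    (h : ⁅x, y⁆ ∈ N) : Commute (QuotientGroup.mk' N x) (QuotientGroup.mk' N y) := by
  rw [← commutatorElement_eq_one_iff_commute, ← map_commutatorElement, QuotientGroup.mk'_apply,
    QuotientGroup.eq_one_iff]
  exact h

theorem commutator_closure_le_of_normal {B Z : Subgroup G} [Z.Normal] {S : Set G}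
    (h : ∀ s ∈ S, ∀ b ∈ B, ⁅s, b⁆ ∈ Z) : ⁅closure S, B⁆ ≤ Z := by
  rw [← QuotientGroup.ker_mk' Z, ← map_eq_bot_iff, map_commutator,
    commutator_eq_bot_iff_le_centralizer, MonoidHom.map_closure, closure_le]
  rintro _ ⟨s, hs, rfl⟩ _ ⟨b, hb, rfl⟩
  exact (commute_mk'_of_commutatorElement_mem (h s hs b hb)).eq.symm

theorem commutator_commutator_closure_le_of_normal {A B N : Subgroup G} [N.Normal]
    {S T : Set G} (hT : (closure T).Normal) (hA : A ≤ closure T)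
    (h : ∀ s ∈ S, ∀ b ∈ B, ∀ t ∈ T, ⁅⁅s, b⁆, t⁆ ∈ N) : ⁅⁅closure S, B⁆, A⁆ ≤ N := by
  have : ((closure T).map (QuotientGroup.mk' N)).Normal :=
    hT.map _ (QuotientGroup.mk'_surjective N)
  rw [← QuotientGroup.ker_mk' N, ← map_eq_bot_iff, map_commutator, map_commutator,
    commutator_eq_bot_iff_le_centralizer]
  refine le_trans ?_ (centralizer_le (map_mono hA))
  rw [MonoidHom.map_closure _ S]
  apply commutator_closure_le_of_normal
  rintro _ ⟨s, hs, rfl⟩ _ ⟨b, hb, rfl⟩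
  rw [MonoidHom.map_closure, centralizer_closure, ← map_commutatorElement, mem_centralizer_iff]
  rintro _ ⟨t, ht, rfl⟩
  exact (commute_mk'_of_commutatorElement_mem (h s hs b hb t ht)).eq.symm

end Subgroup

end GroupLemmas

section WeakCommutativity

variable {H : Type*} [Group H]

theorem commute_chiIota_chiPsi (h : H) : Commute (chiIota H h) (chiPsi H h) := by
  rw [← commutatorElement_eq_one_iff_commute]
  have hrel : ⁅chiIota H h, chiPsi H h⁆ =
      QuotientGroup.mk' _ ⁅(Monoid.Coprod.inl h : Monoid.Coprod H H), Monoid.Coprod.inr h⁆ := by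
    rw [map_commutatorElement]; rfl
  rw [hrel]
  exact (QuotientGroup.eq_one_iff _).mpr (subset_normalClosure ⟨h, rfl⟩)

theorem chiH_sup_chiHpsi : chiH H ⊔ chiHpsi H = ⊤ := by
  have hmap : (Monoid.Coprod.inl.range ⊔ Monoid.Coprod.inr.range).map
      (QuotientGroup.mk' (normalClosure (chiRel H))) = chiH H ⊔ chiHpsi H := by
    rw [Subgroup.map_sup, ← MonoidHom.range_comp, ← MonoidHom.range_comp]; rfl
  rw [← hmap, Monoid.Coprod.range_inl_sup_range_inr]
  exact map_top_of_surjective _ (QuotientGroup.mk'_surjective _)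

variable (H) in
noncomputable def chiLambda (h : H) : chi H := (chiIota H h)⁻¹ * chiPsi H h

theorem chiLambda_mem_Lsub (h : H) : chiLambda H h ∈ Lsub H := subset_closure ⟨h, rfl⟩

@[simp] theorem chiLambda_one : chiLambda H 1 = 1 := by simp [chiLambda]

theorem chiLambda_eq_mul_inv (h : H) : chiLambda H h = chiPsi H h * (chiIota H h)⁻¹ :=
  (commute_chiIota_chiPsi h).inv_left.eq

theorem chiPsi_eq_mul_chiLambda (h : H) : chiPsi H h = chiIota H h * chiLambda H h := by
  rw [chiLambda, mul_inv_cancel_left]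

theorem chiHpsi_le_chiH_sup_Lsub : chiHpsi H ≤ chiH H ⊔ Lsub H := by
  rintro _ ⟨h, rfl⟩
  rw [chiPsi_eq_mul_chiLambda]
  exact mul_mem_sup ⟨h, rfl⟩ (chiLambda_mem_Lsub h)

theorem chiH_sup_Lsub : chiH H ⊔ Lsub H = ⊤ :=
  top_le_iff.mp (chiH_sup_chiHpsi (H := H) ▸ sup_le le_sup_left chiHpsi_le_chiH_sup_Lsub)

instance Lsub_normal : (Lsub H).Normal := by
  refine normal_of_le_normalizer_of_sup_eq_top chiH_sup_Lsub ?_ le_normalizer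
  rw [Lsub, le_normalizer_closure_iff]
  rintro _ ⟨h, rfl⟩ _ ⟨a, rfl⟩
  have hconj : chiIota H h * chiLambda H a * (chiIota H h)⁻¹ =
      chiLambda H (a * h⁻¹) * chiLambda H h := by
    rw [chiLambda_eq_mul_inv h]; simp only [chiLambda, map_mul, map_inv]; group
  exact hconj ▸ mul_mem (subset_closure ⟨_, rfl⟩) (subset_closure ⟨_, rfl⟩)

instance Dsub_normal : (Dsub H).Normal := normal_commutator_of_sup_eq_top chiH_sup_chiHpsi

theorem commutatorElement_chiIota_chiPsi_eq_conj (u v : H) :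
    ⁅chiIota H v, chiPsi H u⁆ =
      chiLambda H u * ⁅chiPsi H v, chiIota H u⁆ * (chiLambda H u)⁻¹ :=
  commutatorElement_eq_conj_of_commute_mul (commute_chiIota_chiPsi u) (commute_chiIota_chiPsi v)
    (by simpa only [map_mul] using commute_chiIota_chiPsi (u * v))

theorem commute_commutatorElement_chiLambda_mul (u v : H) :
    Commute ⁅chiPsi H v, chiIota H u⁆ (chiLambda H v * chiLambda H u) := by
  have hconj : ⁅chiPsi H v, chiIota H u⁆ = (chiLambda H v * chiLambda H u) *
      ⁅chiPsi H v, chiIota H u⁆ * (chiLambda H v * chiLambda H u)⁻¹ :=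
    calc ⁅chiPsi H v, chiIota H u⁆ = ⁅chiIota H u, chiPsi H v⁆⁻¹ :=
          (commutatorElement_inv _ _).symm
      _ = chiLambda H v * ⁅chiIota H v, chiPsi H u⁆ * (chiLambda H v)⁻¹ := by
        rw [commutatorElement_chiIota_chiPsi_eq_conj v u]
        simp only [mul_inv_rev, inv_inv, commutatorElement_inv, mul_assoc]
      _ = _ := by rw [commutatorElement_chiIota_chiPsi_eq_conj u v]; group
  exact (mul_inv_eq_iff_eq_mul.mp hconj.symm).symm

/-- Expand `commutatorElement_chiIota_chiPsi_eq_conj` at `g * u` by the cocycle rule: the `u`-parts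
on both sides agree since `λ (g * u) * ι g = ψ g * λ u`, and what remains says that conjugation by
`λ g` and by `λ (g * u)` agree on `⁅ψ v, ι g⁆`. -/
theorem commute_commutatorElement_chiLambda_inv_mul (v g u : H) :
    Commute ⁅chiPsi H v, chiIota H g⁆ ((chiLambda H g)⁻¹ * chiLambda H (g * u)) := by
  have hψ : ⁅chiIota H v, chiPsi H (g * u)⁆ = ⁅chiIota H v, chiPsi H g⁆ *
      (chiPsi H g * ⁅chiIota H v, chiPsi H u⁆ * (chiPsi H g)⁻¹) := by
    rw [map_mul, commutatorElement_mul_right_eq_mul_conj]; group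
  have hι : ⁅chiPsi H v, chiIota H (g * u)⁆ = ⁅chiPsi H v, chiIota H g⁆ *
      (chiIota H g * ⁅chiPsi H v, chiIota H u⁆ * (chiIota H g)⁻¹) := by
    rw [map_mul, commutatorElement_mul_right_eq_mul_conj]; group
  have hg : chiPsi H g = chiLambda H (g * u) * chiIota H g * (chiLambda H u)⁻¹ := by
    rw [chiLambda_eq_mul_inv (g * u), chiLambda_eq_mul_inv u]; simp only [map_mul]; group
  have hsplit : ⁅chiIota H v, chiPsi H g⁆ *
      (chiPsi H g * ⁅chiIota H v, chiPsi H u⁆ * (chiPsi H g)⁻¹) =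
      (chiLambda H (g * u) * ⁅chiPsi H v, chiIota H g⁆ * (chiLambda H (g * u))⁻¹) *
      (chiPsi H g * ⁅chiIota H v, chiPsi H u⁆ * (chiPsi H g)⁻¹) := by
    rw [← hψ, commutatorElement_chiIota_chiPsi_eq_conj (g * u), hι,
      commutatorElement_chiIota_chiPsi_eq_conj u, hg]
    group
  have hconj := mul_right_cancel hsplit
  rw [commutatorElement_chiIota_chiPsi_eq_conj g] at hconj
  refine (mul_inv_eq_iff_eq_mul.mp ?_).symm
  calc _ = (chiLambda H g)⁻¹ * (chiLambda H (g * u) * ⁅chiPsi H v, chiIota H g⁆ *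
        (chiLambda H (g * u))⁻¹) * chiLambda H g := by group
    _ = ⁅chiPsi H v, chiIota H g⁆ := by rw [← hconj]; group

theorem commute_commutatorElement_chiLambda (v g w : H) :
    Commute ⁅chiPsi H v, chiIota H g⁆ (chiLambda H w) := by
  have hv : Commute ⁅chiPsi H v, chiIota H g⁆ (chiLambda H v) := by
    simpa using (commute_commutatorElement_chiLambda_mul g v).mul_right
      (commute_commutatorElement_chiLambda_inv_mul v g g⁻¹)
  simpa using
    (hv.inv_right.mul_right (commute_commutatorElement_chiLambda_mul g v)).mul_right
      (commute_commutatorElement_chiLambda_inv_mul v g (g⁻¹ * w))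

theorem Lsub_le_centralizer_Dsub : Lsub H ≤ centralizer (Dsub H) := by
  rw [Lsub, closure_le]
  rintro _ ⟨w, rfl⟩
  have hD : Dsub H ≤ centralizer {chiLambda H w} := by
    rw [Dsub, commutator_le]
    rintro _ ⟨g, rfl⟩ _ ⟨v, rfl⟩
    rw [mem_centralizer_singleton_iff, ← commutatorElement_inv]
    exact (commute_commutatorElement_chiLambda v g w).inv_left.eq
  exact mem_centralizer_iff.mpr fun d hd => mem_centralizer_singleton_iff.mp (hD hd)

theorem Dsub_le_centralizer_Lsub : Dsub H ≤ centralizer (Lsub H) :=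
  le_centralizer_iff.mp Lsub_le_centralizer_Dsub

theorem commute_of_mem_Dsub_of_mem_Lsub {d ℓ : chi H} (hd : d ∈ Dsub H) (hℓ : ℓ ∈ Lsub H) :
    Commute d ℓ :=
  (mem_centralizer_iff.mp (Dsub_le_centralizer_Lsub hd) ℓ hℓ).symm

theorem commutatorElement_mul_eq_of_mem_Lsub_of_mem_Dsub {x d : chi H} (hx : x ∈ Lsub H)
    (hd : d ∈ Dsub H) (y : chi H) : ⁅x, d * y⁆ = ⁅x, y⁆ := by
  have hxy : ⁅x, y⁆ ∈ Lsub H :=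
    commutator_le_left (Lsub H) ⊤ (commutator_mem_commutator hx (mem_top y))
  rw [commutatorElement_mul_right_of_commute (commute_of_mem_Dsub_of_mem_Lsub hd hx).symm,
    (commute_of_mem_Dsub_of_mem_Lsub hd hxy).eq, mul_inv_cancel_right]

instance Rsub_normal : (Rsub H).Normal := by
  refine normal_of_le_normalizer_of_sup_eq_top chiH_sup_chiHpsi ?_
    (normalizer_commutator_ge_right _ _)
  rw [Rsub, Subgroup.commutator_def, le_normalizer_closure_iff]
  rintro g hg _ ⟨e, he, _, ⟨b, rfl⟩, rfl⟩
  have he' : g * e * g⁻¹ ∈ ⁅chiH H, Lsub H⁆ := (normalizer_commutator_ge_left _ _ hg e).mp he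
  have hψ : g * chiPsi H b * g⁻¹ = ⁅g, chiPsi H b⁆ * chiPsi H b := by group
  rw [conjugate_commutatorElement, hψ, commutatorElement_mul_eq_of_mem_Lsub_of_mem_Dsub
    (commutator_le_right _ _ he') (commutator_mem_commutator hg ⟨b, rfl⟩)]
  exact subset_closure ⟨_, he', _, ⟨b, rfl⟩, rfl⟩

theorem commutator_commutator_chiHpsi_chiH_Lsub : ⁅⁅chiHpsi H, chiH H⁆, Lsub H⁆ = ⊥ := by
  rw [commutator_comm (chiHpsi H)]
  exact commutator_eq_bot_iff_le_centralizer.mpr Dsub_le_centralizer_Lsub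

theorem commutator_commutator_Lsub_chiHpsi_chiH_le_Rsub :
    ⁅⁅Lsub H, chiHpsi H⁆, chiH H⁆ ≤ Rsub H :=
  commutator_commutator_le_of_rotate (commutator_commutator_chiHpsi_chiH_Lsub.trans_le bot_le)
    le_rfl

/-- The centralizer of the normal subgroup `H ⊔ D` modulo `N` is normal, so it suffices to treat the
generators `λ g` of `L`; and `⁅λ g, ψ b⁆ ∈ L` commutes with `D`. -/
theorem commutator_commutator_Lsub_chiHpsi_chiH_le {N : Subgroup (chi H)} [N.Normal]
    (hN : ∀ a b g : H, ⁅⁅chiLambda H g, chiPsi H b⁆, chiIota H a⁆ ∈ N) :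
    ⁅⁅Lsub H, chiHpsi H⁆, chiH H⁆ ≤ N := by
  have hcl : closure ((chiH H : Set (chi H)) ∪ Dsub H) = chiH H ⊔ Dsub H := by
    rw [Subgroup.closure_union, closure_eq, closure_eq]
  refine commutator_commutator_closure_le_of_normal
    (hcl ▸ normal_sup_commutator_of_sup_eq_top chiH_sup_chiHpsi) (hcl ▸ le_sup_left) ?_
  rintro _ ⟨g, rfl⟩ _ ⟨b, rfl⟩ t (⟨a, rfl⟩ | ht)
  · exact hN a b g
  · have hc : ⁅chiLambda H g, chiPsi H b⁆ ∈ Lsub H :=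
      commutator_le_left _ _ (commutator_mem_commutator (chiLambda_mem_Lsub g) (mem_top _))
    change ⁅⁅chiLambda H g, chiPsi H b⁆, t⁆ ∈ N
    rw [(commute_of_mem_Dsub_of_mem_Lsub ht hc).symm.commutator_eq]
    exact one_mem N

variable (H) in
noncomputable def chiDefect (h₁ h₂ h₃ : H) : chi H :=
  ((chiIota H h₃)⁻¹ * ⁅chiIota H h₁, chiPsi H h₂⁆ * chiIota H h₃) *
    ⁅chiIota H (h₃⁻¹ * h₁ * h₃), chiPsi H (h₃⁻¹ * h₂ * h₃)⁆⁻¹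

theorem chiDefect_eq (h₁ h₂ h₃ : H) :
    chiDefect H h₁ h₂ h₃ =
      ⁅⁅chiLambda H h₃⁻¹, chiPsi H h₂⁆, chiIota H (h₃⁻¹ * h₁ * h₃)⁆ := by
  have hd : ⁅chiIota H h₃⁻¹, chiPsi H h₂⁆ ∈ Dsub H :=
    commutator_mem_commutator ⟨_, rfl⟩ ⟨_, rfl⟩
  have hconj : (chiIota H h₃)⁻¹ * ⁅chiIota H h₁, chiPsi H h₂⁆ * chiIota H h₃ =
      ⁅chiIota H (h₃⁻¹ * h₁ * h₃), ⁅chiIota H h₃⁻¹, chiPsi H h₂⁆ * chiPsi H h₂⁆ := by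
    simp only [map_mul, map_inv, commutatorElement_def]; group
  have hconj_mem :
      ⁅chiIota H (h₃⁻¹ * h₁ * h₃), ⁅chiIota H h₃⁻¹, chiPsi H h₂⁆ * chiPsi H h₂⁆ ∈ Dsub H := by
    rw [← hconj]
    simpa using Dsub_normal.conj_mem _ (commutator_mem_commutator ⟨h₁, rfl⟩ ⟨h₂, rfl⟩)
      (chiIota H h₃)⁻¹
  have hm : ⁅chiLambda H h₃⁻¹, chiPsi H h₂⁆ ∈ Lsub H :=
    commutator_le_left _ _ (commutator_mem_commutator (chiLambda_mem_Lsub _) (mem_top _))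
  have hψ : chiPsi H (h₃⁻¹ * h₂ * h₃) = ⁅chiLambda H h₃⁻¹, chiPsi H h₂⁆ *
      (⁅chiIota H h₃⁻¹, chiPsi H h₂⁆ * chiPsi H h₂) := by
    rw [← commutatorElement_mul_eq_of_mem_Lsub_of_mem_Dsub (chiLambda_mem_Lsub h₃⁻¹) hd,
      chiLambda_eq_mul_inv]
    simp only [map_mul, map_inv, inv_inv, commutatorElement_def]; group
  have hsplit : ∀ a y : chi H, ⁅a, y⁆ ∈ Dsub H →
      ⁅a, ⁅chiLambda H h₃⁻¹, chiPsi H h₂⁆ * y⁆ = ⁅a, ⁅chiLambda H h₃⁻¹, chiPsi H h₂⁆⁆ * ⁅a, y⁆ := by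
    intro a y hay
    rw [commutatorElement_mul_right_eq_mul_conj, mul_assoc _ _ ⁅a, y⁆,
      (commute_of_mem_Dsub_of_mem_Lsub hay hm).symm.eq]
    group
  rw [chiDefect, hconj, hψ, hsplit _ _ hconj_mem]
  group

theorem chiDefect_mem_Rsub (h₁ h₂ h₃ : H) : chiDefect H h₁ h₂ h₃ ∈ Rsub H := by
  rw [chiDefect_eq]
  exact commutator_commutator_Lsub_chiHpsi_chiH_le_Rsub (commutator_mem_commutator
    (commutator_mem_commutator (chiLambda_mem_Lsub _) ⟨_, rfl⟩) ⟨_, rfl⟩)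

theorem chiDefect_mem_Wsub (h₁ h₂ h₃ : H) : chiDefect H h₁ h₂ h₃ ∈ Wsub H := by
  refine mem_inf.mpr ⟨?_, ?_⟩
  · rw [chiDefect_eq]
    exact commutator_le_left _ _ (commutator_mem_commutator
      (commutator_le_left _ _ (commutator_mem_commutator (chiLambda_mem_Lsub _) (mem_top _)))
      (mem_top _))
  · have hconj := Dsub_normal.conj_mem _
      (commutator_mem_commutator ⟨h₁, rfl⟩ ⟨h₂, rfl⟩) (chiIota H h₃)⁻¹
    rw [inv_inv] at hconj
    exact mul_mem hconj (inv_mem (commutator_mem_commutator ⟨_, rfl⟩ ⟨_, rfl⟩))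

theorem map_commutator_le_Dsub_sup_Lsub :
    Subgroup.map (chiIota H) (commutator H) ≤ Dsub H ⊔ Lsub H := by
  rw [_root_.commutator_def, map_commutator, commutator_le]
  rintro _ ⟨x, -, rfl⟩ _ ⟨y, -, rfl⟩
  have hy : chiIota H y = chiPsi H y * (chiLambda H y)⁻¹ := by
    rw [chiPsi_eq_mul_chiLambda, mul_inv_cancel_right]
  rw [hy, commutatorElement_mul_right_eq_mul_conj, mul_assoc _ (chiPsi H y),
    mul_assoc _ _ (chiPsi H y)⁻¹]
  exact mul_mem (mem_sup_left (commutator_mem_commutator ⟨x, rfl⟩ ⟨y, rfl⟩))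
    (mem_sup_right (Lsub_normal.conj_mem _ (commutator_le_right _ _
      (commutator_mem_commutator (mem_top _) (inv_mem (chiLambda_mem_Lsub y)))) _))

theorem Dsub_sup_Lsub_le_centralizer_Wsub : Dsub H ⊔ Lsub H ≤ centralizer (Wsub H) :=
  sup_le (Dsub_le_centralizer_Lsub.trans (centralizer_le inf_le_left))
    (Lsub_le_centralizer_Dsub.trans (centralizer_le inf_le_right))

theorem commute_chiDefect_chiIota {k : H} (hk : k ∈ commutator H) (h₁ h₂ h₃ : H) :
    Commute (chiIota H k) (chiDefect H h₁ h₂ h₃) :=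
  (mem_centralizer_iff.mp (Dsub_sup_Lsub_le_centralizer_Wsub
    (map_commutator_le_Dsub_sup_Lsub (mem_map_of_mem _ hk))) _
    (chiDefect_mem_Wsub h₁ h₂ h₃)).symm

variable (H) in
def defectSet (T : Set H) : Set (chi H) :=
  {x | ∃ h₁ h₂ h₃ : H, ∃ t ∈ T, x = (chiIota H t)⁻¹ * chiDefect H h₁ h₂ h₃ * chiIota H t}

/-- Conjugation by `ι h` replaces `t` by `t * h⁻¹`, which is `k * t'` with `t' ∈ T` and `k ∈ H'`,
and `ι k` centralizes the defect. -/
theorem chiIota_conj_mem_defectSet {T : Set H} (hT : ∀ h : H, ∃ t ∈ T, h * t⁻¹ ∈ commutator H)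
    (h : H) {x : chi H} (hx : x ∈ defectSet H T) :
    chiIota H h * x * (chiIota H h)⁻¹ ∈ defectSet H T := by
  obtain ⟨h₁, h₂, h₃, t, -, rfl⟩ := hx
  obtain ⟨t', ht', hk⟩ := hT (t * h⁻¹)
  refine ⟨h₁, h₂, h₃, t', ht', ?_⟩
  calc _ = (chiIota H t')⁻¹ * ((chiIota H (t * h⁻¹ * t'⁻¹))⁻¹ * chiDefect H h₁ h₂ h₃ *
        chiIota H (t * h⁻¹ * t'⁻¹)) * chiIota H t' := by simp only [map_mul, map_inv]; group
    _ = _ := by rw [(commute_chiDefect_chiIota hk h₁ h₂ h₃).inv_mul_cancel]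

theorem normal_closure_defectSet {T : Set H} (hT : ∀ h : H, ∃ t ∈ T, h * t⁻¹ ∈ commutator H) :
    (closure (defectSet H T)).Normal := by
  have hD : closure (defectSet H T) ≤ Dsub H := by
    rw [closure_le]
    rintro _ ⟨h₁, h₂, h₃, t, -, rfl⟩
    simpa using Dsub_normal.conj_mem _ (chiDefect_mem_Wsub h₁ h₂ h₃).2 (chiIota H t)⁻¹
  refine normal_of_le_normalizer_of_sup_eq_top chiH_sup_Lsub ?_
    ((Lsub_le_centralizer_Dsub.trans (centralizer_le hD)).trans (centralizer_le_normalizer _))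
  rw [le_normalizer_closure_iff]
  rintro _ ⟨h, rfl⟩ x hx
  exact subset_closure (chiIota_conj_mem_defectSet hT h hx)

theorem chiDefect_mem_closure_defectSet {T : Set H}
    (hT : ∀ h : H, ∃ t ∈ T, h * t⁻¹ ∈ commutator H) (h₁ h₂ h₃ : H) :
    chiDefect H h₁ h₂ h₃ ∈ closure (defectSet H T) := by
  obtain ⟨t, ht, -⟩ := hT 1
  simpa [mul_assoc] using (normal_closure_defectSet hT).conj_mem _
    (subset_closure ⟨h₁, h₂, h₃, t, ht, rfl⟩) (chiIota H t)

theorem Rsub_le_closure_defectSet {T : Set H} (hT : ∀ h : H, ∃ t ∈ T, h * t⁻¹ ∈ commutator H) :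
    Rsub H ≤ closure (defectSet H T) := by
  have := normal_closure_defectSet hT
  refine commutator_commutator_le_of_rotate (commutator_commutator_Lsub_chiHpsi_chiH_le ?_)
    (commutator_commutator_chiHpsi_chiH_Lsub.trans_le bot_le)
  intro a b g
  have hdef := chiDefect_eq (g⁻¹ * a * g) b g⁻¹
  simp only [inv_inv, mul_assoc, mul_inv_cancel_left, mul_inv_cancel, mul_one] at hdef
  exact hdef ▸ chiDefect_mem_closure_defectSet hT _ _ _

theorem closure_defectSet_le_Rsub (T : Set H) : closure (defectSet H T) ≤ Rsub H := by
  rw [closure_le]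
  rintro _ ⟨h₁, h₂, h₃, t, -, rfl⟩
  simpa using Rsub_normal.conj_mem _ (chiDefect_mem_Rsub h₁ h₂ h₃) (chiIota H t)⁻¹

end WeakCommutativity

/-- If T is a transversal for H′ in H, then R(H) is generated by the
conjugates, by elements of T, of the elements
[h₁, h₂^ψ]^{h₃} · [h₁^{h₃}, (h₂^{h₃})^ψ]⁻¹. -/
theorem stmt_11 (H : Type*) [Group H] (T : Set H)
    (hT : ∀ h : H, ∃! t : H, t ∈ T ∧ h * t⁻¹ ∈ commutator H) :
    Rsub H =
      Subgroup.closure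
        {x : chi H | ∃ h₁ h₂ h₃ : H, ∃ t ∈ T,
          x = (chiIota H t)⁻¹ *
                (((chiIota H h₃)⁻¹ * ⁅chiIota H h₁, chiPsi H h₂⁆ * chiIota H h₃) *
                  ⁅chiIota H (h₃⁻¹ * h₁ * h₃), chiPsi H (h₃⁻¹ * h₂ * h₃)⁆⁻¹) *
                chiIota H t} :=
  le_antisymm (Rsub_le_closure_defectSet fun h => (hT h).exists) (closure_defectSet_le_Rsub T)
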